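/- arXiv:2004.14835 — 3 statements merged into one kernel-verified Lean document; each statement's English description precedes it below -/
import Mathlib

section
/- Preservation of PrIC3 invariants under obligation resolution: let (i, s, δ) with i > 0 be such that Φ(F_{i-1})[s] ≤ δ and let frames F_0, …, F_i satisfy the PrIC3 invariants. Then the updated frames F_0[s ↦ min(F_0[s], δ)], …, F_i[s ↦ min(F_i[s], δ)] also satisfy the PrIC3 invariants. -/
open scoped ENNReal BigOperators Classical
set_option linter.unusedSectionVars false

variable {S Act : Type*} [Fintype S] [Fintype Act]

/-- A frame maps every state into the unit interval `[0,1]` (embedded in `ℝ≥0∞`). -/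
def IsFrame {S : Type*} (F : S → ℝ≥0∞) : Prop := ∀ s, F s ≤ 1

/-- The actions enabled at a state: those with positive outgoing probability mass. -/
def enabled {S Act : Type*} (P : S → Act → S → ℝ≥0∞) (s : S) : Set Act :=
  {a | ∃ s', 0 < P s a s'}

/-- The Bellman operator of a (sub)stochastic transition function `P` with bad states `B`. -/
noncomputable def bellman (P : S → Act → S → ℝ≥0∞) (B : Set S) (F : S → ℝ≥0∞) : S → ℝ≥0∞ :=
  fun s => if s ∈ B then 1 else ⨆ a ∈ enabled P s, ∑ s', P s a s' * F s'

theorem bellman_mono (P : S → Act → S → ℝ≥0∞) (B : Set S) : Monotone (bellman P B) := by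
  intro F G h s
  unfold bellman
  split
  · exact le_rfl
  · exact iSup_mono fun a => iSup_mono fun _ =>
      Finset.sum_le_sum fun s' _ => mul_le_mul_right (h s') _

/-- The Bellman operator as a monotone map on the complete lattice of frames. -/
noncomputable def bellmanHom (P : S → Act → S → ℝ≥0∞) (B : Set S) :
    (S → ℝ≥0∞) →o (S → ℝ≥0∞) := ⟨bellman P B, bellman_mono P B⟩

/-- The maximal reachability probability `Pr^max(s → ◊B)`,
as the least fixed point of the Bellman operator. -/
noncomputable def prMax (P : S → Act → S → ℝ≥0∞) (B : Set S) : S → ℝ≥0∞ :=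
  OrderHom.lfp (bellmanHom P B)

/-- A finite Markov decision process. -/
structure MDP (S Act : Type*) [Fintype S] [Fintype Act] where
  init : S
  P : S → Act → S → ℝ≥0∞
  stoch : ∀ s a, a ∈ enabled P s → ∑ s', P s a s' = 1
  exists_enabled : ∀ s, (enabled P s).Nonempty

/-- The PrIC3 invariants for frames `F 0, …, F k`: initiality, chain property,
frame safety, and relative inductivity. -/
def PrIC3Inv (M : MDP S Act) (B : Set S) (lam : ℝ≥0∞) (F : ℕ → S → ℝ≥0∞) (k : ℕ) : Prop :=
  (F 0 = bellman M.P B (fun _ => 0)) ∧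
  (∀ i < k, F i ≤ F (i+1)) ∧
  (∀ i ≤ k, F i M.init ≤ lam) ∧
  (∀ i < k, bellman M.P B (F i) ≤ F (i+1))

/-! Write `G_j` for `F_j` lowered at `s` to `min (F_j s) δ`. Since `G_j ≤ F_j`, the chain
property, frame safety and the old inductivity bounds survive; the one new constraint,
`Φ(G_j)[s] ≤ δ`, follows from `Φ(G_j) ≤ Φ(F_j) ≤ Φ(F_{i-1})` by the chain property.
`F 0` is not changed at all, since `F 0 = Φ(0) ≤ Φ(F_{i-1})`. -/

section UpdateMin

variable {α β : Type*} [DecidableEq α] [LinearOrder β]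

theorem Function.update_min_le (f : α → β) (a : α) (c : β) :
    Function.update f a (min (f a) c) ≤ f := by
  intro x
  rcases eq_or_ne x a with rfl | hx
  · simp
  · simp [hx]

theorem Function.le_update_min_iff {f g : α → β} {a : α} {c : β} :
    g ≤ Function.update f a (min (f a) c) ↔ g ≤ f ∧ g a ≤ c := by
  simp only [le_update_iff, le_min_iff]
  constructor
  · rintro ⟨⟨hfa, hc⟩, hne⟩
    exact ⟨fun x => (eq_or_ne x a).elim (· ▸ hfa) (hne x), hc⟩
  · rintro ⟨hgf, hc⟩
    exact ⟨⟨hgf a, hc⟩, fun x _ => hgf x⟩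

theorem Function.update_min_of_le {f : α → β} {a : α} {c : β} (h : f a ≤ c) :
    Function.update f a (min (f a) c) = f := by
  rw [min_eq_left h, Function.update_eq_self]

end UpdateMin

theorem monotoneOn_Iic_of_le_succ {α : Type*} [Preorder α] {f : ℕ → α} {k : ℕ}
    (h : ∀ n < k, f n ≤ f (n + 1)) : MonotoneOn f (Set.Iic k) := by
  intro m _ n hn hmn
  rw [Set.mem_Iic] at hn
  induction hmn with
  | refl => rfl
  | step _ ih => exact (ih (Nat.le_of_succ_le hn)).trans (h _ hn)

theorem pric3_inv_preserved_update_general [DecidableEq S] (M : MDP S Act) (B : Set S)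
    (lam : ℝ≥0∞) (F : ℕ → S → ℝ≥0∞) (i : ℕ) (s : S) (δ : ℝ≥0∞)
    (hδ : bellman M.P B (F (i-1)) s ≤ δ)
    (hinv : PrIC3Inv M B lam F i) :
    PrIC3Inv M B lam (fun j => Function.update (F j) s (min (F j s) δ)) i := by
  obtain ⟨hinit, hchain, hsafe, hind⟩ := hinv
  have hbellman_le : ∀ j < i, bellman M.P B (F j) s ≤ δ := fun j hj =>
    (bellman_mono M.P B (monotoneOn_Iic_of_le_succ hchain (Set.mem_Iic.2 hj.le)
      (Set.mem_Iic.2 (Nat.sub_le i 1)) (Nat.le_sub_one_of_lt hj)) s).trans hδ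
  have hF0 : F 0 s ≤ δ := by
    rw [hinit]
    exact (bellman_mono M.P B (fun _ => zero_le) s).trans hδ
  refine ⟨by simpa [Function.update_min_of_le hF0] using hinit, fun j hj => ?_,
    fun j hj => (Function.update_min_le _ _ _ _).trans (hsafe j hj), fun j hj => ?_⟩
  · refine Function.le_update_min_iff.2 ⟨(Function.update_min_le _ _ _).trans (hchain j hj), ?_⟩
    simp
  · have hlower := bellman_mono M.P B (Function.update_min_le (F j) s δ)
    exact Function.le_update_min_iff.2
      ⟨hlower.trans (hind j hj), (hlower s).trans (hbellman_le j hj)⟩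

/-- resolving an obligation `(i, s, δ)` with `Φ(F (i-1))[s] ≤ δ`
by lowering the value of `s` in all frames `F 0, …, F i` to at most `δ`
preserves the PrIC3 invariants. -/
theorem pric3_inv_preserved_update [DecidableEq S] (M : MDP S Act) (B : Set S)
    (lam : ℝ≥0∞) (F : ℕ → S → ℝ≥0∞) (i : ℕ) (hi : 0 < i) (s : S) (δ : ℝ≥0∞)
    (hδ : bellman M.P B (F (i-1)) s ≤ δ)
    (hinv : PrIC3Inv M B lam F i) :
    PrIC3Inv M B lam (fun j => Function.update (F j) s (min (F j s) δ)) i :=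
  pric3_inv_preserved_update_general M B lam F i s δ hδ hinv
end

section
/- No PrIC3 frame sequence of length exceeding a witnessing bound exists for unsafe MDPs: if Φ^{n+1}(0)[s_I] > λ for some n, then there is no sequence of frames F_0, …, F_n satisfying all PrIC3 invariants (initiality, chain property, frame safety, relative inductivity) of length n+1. -/
open scoped ENNReal BigOperators Classical
set_option linter.unusedSectionVars false

variable {S Act : Type*} [Fintype S] [Fintype Act]

theorem iterate_bellman_le_of_pric3Inv {M : MDP S Act} {B : Set S} {lam : ℝ≥0∞}
    {F : ℕ → S → ℝ≥0∞} {n : ℕ} (hF : PrIC3Inv M B lam F n) :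
    (bellman M.P B)^[n+1] (fun _ => 0) ≤ F n :=
  (bellman_mono M.P B).seq_le_seq n (x := fun k => (bellman M.P B)^[k+1] (fun _ => 0))
    hF.1.ge (fun _ _ => (Function.iterate_succ_apply' _ _ _).le) hF.2.2.2

/-- if `Φ^{n+1}(0)[s_I] > λ`, then no sequence of frames `F 0, …, F n`
satisfies all PrIC3 invariants. -/
theorem no_pric3_frames_of_unsafe (M : MDP S Act) (B : Set S) (lam : ℝ≥0∞) (n : ℕ)
    (h : lam < (bellman M.P B)^[n+1] (fun _ => 0) M.init) :
    ∀ F : ℕ → S → ℝ≥0∞, ¬ PrIC3Inv M B lam F n := by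
  intro F hF
  have hsafe : F n M.init ≤ lam := hF.2.2.1 n le_rfl
  exact hsafe.not_gt (h.trans_le (iterate_bellman_le_of_pric3Inv hF M.init))
end

section
/- Propagation preserves relative inductivity: given frames F_0, …, F_{k+1} satisfying the PrIC3 invariants except possibly frame safety at F_{k+1}, and given i < k+1 and a state s such that replacing F_{i+1}[s] by F_i[s] preserves Φ(F_i) ≤ F_{i+1}' and Φ(F_{i+1}') ≤ F_{i+2} (when i+2 ≤ k+1), the updated sequence still satisfies initiality, the chain property, and relative inductivity. -/
open scoped ENNReal BigOperators Classical
set_option linter.unusedSectionVars false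

variable {S Act : Type*} [Fintype S] [Fintype Act]

theorem Function.update_apply_mem_Icc {ι : Type*} {β : Type*} [DecidableEq ι] [Preorder β]
    {f g : ι → β} (hgf : g ≤ f) (x : ι) : Function.update f x (g x) ∈ Set.Icc g f :=
  ⟨le_update_iff.2 ⟨le_rfl, fun y _ => hgf y⟩, update_le_self_iff.2 (hgf x)⟩

open Function in
theorem forall_lt_rel_update_succ {α : Type*} (R : α → α → Prop) {n i : ℕ} {F : ℕ → α} {a : α}
    (hF : ∀ j < n, R (F j) (F (j+1))) (hlo : R (F i) a) (hhi : i + 2 ≤ n → R a (F (i+2))) :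
    ∀ j < n, R (update F (i+1) a j) (update F (i+1) a (j+1)) := by
  intro j hj
  by_cases hji : j = i
  · subst hji
    rwa [update_self, update_of_ne (Nat.succ_ne_self j).symm]
  by_cases hji1 : j = i + 1
  · subst hji1
    rw [update_self, update_of_ne (Nat.succ_ne_self _)]
    exact hhi hj
  · rw [update_of_ne hji1, update_of_ne (fun h => hji (Nat.succ_injective h))]
    exact hF j hj

theorem propagate_preserves_general [DecidableEq S] (M : MDP S Act) (B : Set S)
    (k : ℕ) (F : ℕ → S → ℝ≥0∞)
    (h0 : F 0 = bellman M.P B (fun _ => 0))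
    (hchain : ∀ j < k+1, F j ≤ F (j+1))
    (hind : ∀ j < k+1, bellman M.P B (F j) ≤ F (j+1))
    (i : ℕ) (hi : i < k+1) (s : S)
    (G : ℕ → S → ℝ≥0∞)
    (hG : G = fun j => if j = i+1 then Function.update (F (i+1)) s (F i s) else F j)
    (h1 : bellman M.P B (F i) ≤ G (i+1))
    (h2 : i + 2 ≤ k + 1 → bellman M.P B (G (i+1)) ≤ F (i+2)) :
    (G 0 = bellman M.P B (fun _ => 0)) ∧
    (∀ j < k+1, G j ≤ G (j+1)) ∧
    (∀ j < k+1, bellman M.P B (G j) ≤ G (j+1)) := by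
  set H := Function.update (F (i+1)) s (F i s)
  replace hG : G = Function.update F (i+1) H :=
    hG.trans (funext fun j => (Function.update_apply F (i+1) H j).symm)
  subst hG
  rw [Function.update_self] at h1 h2
  obtain ⟨hFi_le_H, hH_le_succ⟩ : H ∈ Set.Icc (F i) (F (i+1)) :=
    Function.update_apply_mem_Icc (hchain i hi) s
  refine ⟨by rw [Function.update_of_ne (Nat.succ_ne_zero i).symm, h0], ?_, ?_⟩
  · exact forall_lt_rel_update_succ (· ≤ ·) hchain hFi_le_H
      fun h => hH_le_succ.trans (hchain (i+1) h)
  · exact forall_lt_rel_update_succ (fun a b => bellman M.P B a ≤ b) hind h1 h2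

/-- propagation preserves initiality, the chain property and relative
inductivity: lowering `F (i+1)` at `s` to `F i s` is harmless provided relative
inductivity is preserved around index `i+1`. -/
theorem propagate_preserves [DecidableEq S] (M : MDP S Act) (B : Set S) (lam : ℝ≥0∞)
    (k : ℕ) (F : ℕ → S → ℝ≥0∞)
    (h0 : F 0 = bellman M.P B (fun _ => 0))
    (hchain : ∀ j < k+1, F j ≤ F (j+1))
    (hsafe : ∀ j ≤ k, F j M.init ≤ lam)
    (hind : ∀ j < k+1, bellman M.P B (F j) ≤ F (j+1))
    (i : ℕ) (hi : i < k+1) (s : S)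
    (G : ℕ → S → ℝ≥0∞)
    (hG : G = fun j => if j = i+1 then Function.update (F (i+1)) s (F i s) else F j)
    (h1 : bellman M.P B (F i) ≤ G (i+1))
    (h2 : i + 2 ≤ k + 1 → bellman M.P B (G (i+1)) ≤ F (i+2)) :
    (G 0 = bellman M.P B (fun _ => 0)) ∧
    (∀ j < k+1, G j ≤ G (j+1)) ∧
    (∀ j < k+1, bellman M.P B (G j) ≤ G (j+1)) :=
  propagate_preserves_general M B k F h0 hchain hind i hi s G hG h1 h2
end
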